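/- Let 0 < ε_1 < … < ε_m be tolerances, let w_1, …, w_m ≥ 0 be real weights, and let c_w be the weighted cost values. Then the minimum, over all ε_m-simplifications π, of the sum over the edges (x,y) of π of c_w(m,(x,y)) equals the minimum, over all progressive simplifications S_1, …, S_m for ε_1 < … < ε_m, of Σ_{k=1}^m w_k·(|S_k| − 1). Consequently, the minimum of the weighted cumulative size Σ_{k=1}^m w_k·|S_k| over progressive simplifications equals Σ_{k=1}^m w_k plus the minimum c_w(m,·)-cost of an ε_m-simplification. -/

import Mathlib

/-!
Unfolding the recursion, the `c_w(k)`-cost of an `ε_k`-path `L` is `w_k (|L| - 1)` plus the sum,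
over the edges of `L`, of the optimal `c_w(k-1)`-costs at tolerance `ε_{k-1}`. If the vertices
of `L` lie on an `ε_{k-1}`-path `L'`, then `L'` splits at them into paths joining the endpoints
of the edges of `L`, so this sum is at most the `c_w(k-1)`-cost of `L'`; by induction on `k`,
no progressive simplification beats the optimum. Conversely, replacing every edge of `L` by an
optimal `ε_{k-1}`-path produces such an `L'` for which the sum is attained, and iterating this
downwards from an optimal `ε_m`-simplification yields a progressive simplification achieving
the optimum. All minima are attained because a strictly increasing sequence of indices has at
most `n` terms and consecutive shortcuts have error `0`.
-/

open Metric

noncomputable section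

/-- The Euclidean plane. -/
abbrev Pt : Type := EuclideanSpace ℝ (Fin 2)

/-- The subcurve `⟨p i, …, p j⟩`: the union of the segments between consecutive vertices. -/
def subcurve {n : ℕ} (p : Fin n → Pt) (i j : Fin n) : Set Pt :=
  ⋃ (t : Fin n) (_ : i ≤ t ∧ t < j) (h : (t : ℕ) + 1 < n),
    segment ℝ (p t) (p ⟨(t : ℕ) + 1, h⟩)

/-- The (Hausdorff-distance) error of the shortcut `(i, j)`. -/
def err {n : ℕ} (p : Fin n → Pt) (i j : Fin n) : ℝ :=
  Metric.hausdorffDist (segment ℝ (p i) (p j)) (subcurve p i j)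

/-- The edges (consecutive pairs) of a path given as a list of vertices. -/
def edges {n : ℕ} (l : List (Fin n)) : List (Fin n × Fin n) := l.zip l.tail

/-- `l` is a path from `i` to `j` at tolerance `ε`: a strictly increasing sequence of
indices starting at `i`, ending at `j`, all of whose edges are valid shortcuts for `ε`. -/
def IsPath {n : ℕ} (p : Fin n → Pt) (ε : ℝ) (i j : Fin n) (l : List (Fin n)) : Prop :=
  l.Chain' (· < ·) ∧ l.head? = some i ∧ l.getLast? = some j ∧
    ∀ e ∈ edges l, err p e.1 e.2 ≤ ε

/-- The cost of a path: the sum of the costs of its edges. -/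
def pathCost {n : ℕ} {α : Type*} [AddCommMonoid α] (c : Fin n → Fin n → α)
    (l : List (Fin n)) : α :=
  ((edges l).map (fun e => c e.1 e.2)).sum

/-- Minimum cost (natural-valued) of a path from `i` to `j` at tolerance `ε`. -/
def minCost {n : ℕ} (p : Fin n → Pt) (ε : ℝ) (c : Fin n → Fin n → ℕ) (i j : Fin n) : ℕ :=
  sInf {s : ℕ | ∃ l, IsPath p ε i j l ∧ pathCost c l = s}

/-- Minimum cost (real-valued) of a path from `i` to `j` at tolerance `ε`. -/
def minCostR {n : ℕ} (p : Fin n → Pt) (ε : ℝ) (c : Fin n → Fin n → ℝ) (i j : Fin n) : ℝ :=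
  sInf {s : ℝ | ∃ l, IsPath p ε i j l ∧ pathCost c l = s}

/-- `l` is a minimum-cost path from `i` to `j` at tolerance `ε` w.r.t. cost `c`. -/
def IsMinPath {n : ℕ} (p : Fin n → Pt) (ε : ℝ) (c : Fin n → Fin n → ℕ) (i j : Fin n)
    (l : List (Fin n)) : Prop :=
  IsPath p ε i j l ∧ ∀ l', IsPath p ε i j l' → pathCost c l ≤ pathCost c l'

/-- `L'` is obtained from `L` by replacing each edge `(i, j)` of `L` by a minimum-cost
path from `i` to `j` at tolerance `ε`, and concatenating. -/
def Refines {n : ℕ} (p : Fin n → Pt) (ε : ℝ) (c : Fin n → Fin n → ℕ)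
    (L L' : List (Fin n)) : Prop :=
  ∃ f : Fin n × Fin n → List (Fin n),
    (∀ e ∈ edges L, IsMinPath p ε c e.1 e.2 (f e)) ∧
    L' = L.take 1 ++ ((edges L).map (fun e => (f e).tail)).flatten

/-- `S 1, …, S m` is a progressive simplification for the tolerances `ε 1 < … < ε m`:
each `S k` is an `ε k`-simplification (a path from `v0` to `v1`), and every vertex of
`S (k+1)` is a vertex of `S k`. -/
def ProgSimp {n : ℕ} (p : Fin n → Pt) (m : ℕ) (ε : ℕ → ℝ) (v0 v1 : Fin n)
    (S : ℕ → List (Fin n)) : Prop :=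
  (∀ k, 1 ≤ k → k ≤ m → IsPath p (ε k) v0 v1 (S k)) ∧
  (∀ k, 1 ≤ k → k < m → ∀ v ∈ S (k + 1), v ∈ S k)

section Edges

variable {n : ℕ}

@[simp] lemma edges_nil : edges ([] : List (Fin n)) = [] := rfl

@[simp] lemma edges_singleton (a : Fin n) : edges [a] = [] := rfl

@[simp] lemma edges_cons_cons (a b : Fin n) (l : List (Fin n)) :
    edges (a :: b :: l) = (a, b) :: edges (b :: l) := rfl

lemma length_edges (l : List (Fin n)) : (edges l).length = l.length - 1 := by
  simp [edges]

lemma edges_append_cons (s : List (Fin n)) (y : Fin n) (t : List (Fin n)) :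
    edges (s ++ y :: t) = edges (s ++ [y]) ++ edges (y :: t) := by
  induction s with
  | nil => simp
  | cons a s ih =>
    cases s with
    | nil => simp
    | cons b s => simpa using ih

lemma lt_of_mem_edges {l : List (Fin n)} (hl : l.IsChain (· < ·)) {e : Fin n × Fin n}
    (he : e ∈ edges l) : e.1 < e.2 := by
  induction l with
  | nil => simp at he
  | cons a l ih =>
    cases l with
    | nil => simp at he
    | cons b l =>
      rw [edges_cons_cons, List.mem_cons] at he
      obtain ⟨hab, hl⟩ := List.isChain_cons_cons.1 hl
      rcases he with rfl | he
      exacts [hab, ih hl he]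

variable {α : Type*} [AddCommMonoid α]

@[simp] lemma pathCost_singleton (c : Fin n → Fin n → α) (a : Fin n) : pathCost c [a] = 0 :=
  rfl

@[simp] lemma pathCost_cons_cons (c : Fin n → Fin n → α) (a b : Fin n) (l : List (Fin n)) :
    pathCost c (a :: b :: l) = c a b + pathCost c (b :: l) :=
  rfl

lemma pathCost_append_cons (c : Fin n → Fin n → α) (s : List (Fin n)) (y : Fin n)
    (t : List (Fin n)) :
    pathCost c (s ++ y :: t) = pathCost c (s ++ [y]) + pathCost c (y :: t) := by
  unfold pathCost
  rw [edges_append_cons, List.map_append, List.sum_append]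

lemma pathCost_congr {c d : Fin n → Fin n → α} {l : List (Fin n)}
    (h : ∀ e ∈ edges l, c e.1 e.2 = d e.1 e.2) : pathCost c l = pathCost d l :=
  congrArg List.sum (List.map_congr_left h)

lemma pathCost_add (c d : Fin n → Fin n → α) (l : List (Fin n)) :
    pathCost (fun i j => c i j + d i j) l = pathCost c l + pathCost d l :=
  List.sum_map_add

lemma pathCost_const (a : ℝ) {l : List (Fin n)} (hl : l ≠ []) :
    pathCost (fun _ _ => a) l = a * ((l.length : ℝ) - 1) := by
  have : 1 ≤ l.length := List.length_pos_iff.2 hl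
  simp [pathCost, length_edges, Nat.cast_sub this, mul_comm]

end Edges

lemma subcurve_succ {n : ℕ} (p : Fin n → Pt) (i : Fin n) (h : (i : ℕ) + 1 < n) :
    subcurve p i ⟨i + 1, h⟩ = segment ℝ (p i) (p ⟨i + 1, h⟩) := by
  ext x
  simp only [subcurve, Set.mem_iUnion]
  constructor
  · rintro ⟨t, ⟨hit, hti⟩, ht, hx⟩
    obtain rfl : t = i := by
      rw [Fin.le_def] at hit
      rw [Fin.lt_def] at hti
      exact Fin.ext (by simp only at hti; omega)
    exact hx
  · exact fun hx => ⟨i, ⟨le_rfl, Fin.lt_def.2 (Nat.lt_succ_self _)⟩, h, hx⟩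

lemma err_succ {n : ℕ} (p : Fin n → Pt) (i : Fin n) (h : (i : ℕ) + 1 < n) :
    err p i ⟨i + 1, h⟩ = 0 := by
  rw [err, subcurve_succ, hausdorffDist_self_zero]

section Paths

variable {n : ℕ} {p : Fin n → Pt} {ε ε' : ℝ} {i j : Fin n} {l : List (Fin n)}

lemma isPath_singleton (p : Fin n → Pt) (ε : ℝ) (i : Fin n) : IsPath p ε i i [i] :=
  ⟨List.isChain_singleton i, rfl, rfl, by simp⟩

namespace IsPath

lemma pairwise (h : IsPath p ε i j l) : l.Pairwise (· < ·) :=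
  List.isChain_iff_pairwise.1 h.1

lemma exists_eq_cons (h : IsPath p ε i j l) : ∃ t, l = i :: t :=
  List.head?_eq_some_iff.1 h.2.1

lemma exists_eq_append (h : IsPath p ε i j l) : ∃ s, l = s ++ [j] :=
  List.getLast?_eq_some_iff.1 h.2.2.1

lemma ne_nil (h : IsPath p ε i j l) : l ≠ [] := by
  rintro rfl
  simpa using h.2.1

lemma head_mem (h : IsPath p ε i j l) : i ∈ l :=
  List.mem_of_mem_head? h.2.1

lemma length_le (h : IsPath p ε i j l) : l.length ≤ n := by
  simpa using List.Nodup.length_le_card (h.pairwise.imp ne_of_lt)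

lemma le_of_mem {v : Fin n} (h : IsPath p ε i j l) (hv : v ∈ l) : i ≤ v := by
  obtain ⟨t, rfl⟩ := h.exists_eq_cons
  rcases List.mem_cons.1 hv with rfl | hv
  exacts [le_rfl, (List.rel_of_pairwise_cons h.pairwise hv).le]

lemma eq_singleton (h : IsPath p ε i i l) : l = [i] := by
  obtain ⟨t, rfl⟩ := h.exists_eq_cons
  cases t with
  | nil => rfl
  | cons b t =>
    have hi : i ∈ b :: t := List.mem_of_getLast? (by simpa using h.2.2.1)
    exact absurd (List.rel_of_pairwise_cons h.pairwise hi) (lt_irrefl i)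

end IsPath

lemma isPath_append_cons_iff {s t : List (Fin n)} {y : Fin n} :
    IsPath p ε i j (s ++ y :: t) ↔ IsPath p ε i y (s ++ [y]) ∧ IsPath p ε y j (y :: t) := by
  have hhead : (s ++ y :: t).head? = (s ++ [y]).head? := by cases s <;> rfl
  simp only [IsPath, List.Chain']
  rw [List.isChain_split, edges_append_cons, hhead, List.getLast?_append_cons]
  simp only [List.mem_append, List.head?_cons, List.getLast?_concat]
  grind

lemma isPath_cons_cons_iff {b : Fin n} {t : List (Fin n)} :
    IsPath p ε i j (i :: b :: t) ↔ i < b ∧ err p i b ≤ ε ∧ IsPath p ε b j (b :: t) := by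
  rw [← List.singleton_append, isPath_append_cons_iff]
  simp [IsPath, List.Chain', and_assoc]

lemma exists_isPath (p : Fin n → Pt) (hε : 0 ≤ ε) (hij : i ≤ j) :
    ∃ l, IsPath p ε i j l := by
  induction hd : (j : ℕ) - i generalizing i with
  | zero =>
    obtain rfl : i = j := Fin.ext (by rw [Fin.le_def] at hij; omega)
    exact ⟨[i], isPath_singleton p ε i⟩
  | succ d ih =>
    rw [Fin.le_def] at hij
    have hi : (i : ℕ) + 1 < n := by omega
    obtain ⟨l, hl⟩ := ih (i := ⟨i + 1, hi⟩) (Fin.le_def.2 (by simp only; omega))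
      (by simp only; omega)
    obtain ⟨t, rfl⟩ := hl.exists_eq_cons
    have hstep : err p i ⟨i + 1, hi⟩ ≤ ε := (err_succ p i hi).le.trans hε
    exact ⟨_, isPath_cons_cons_iff.2 ⟨Fin.lt_def.2 (Nat.lt_succ_self _), hstep, hl⟩⟩

lemma finite_pathCosts {α : Type*} [AddCommMonoid α] (p : Fin n → Pt) (ε : ℝ)
    (c : Fin n → Fin n → α) (i j : Fin n) :
    {s : α | ∃ l, IsPath p ε i j l ∧ pathCost c l = s}.Finite := by
  refine ((List.finite_length_le (Fin n) n).image (pathCost c)).subset ?_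
  rintro _ ⟨l, hl, rfl⟩
  exact ⟨l, hl.length_le, rfl⟩

lemma minCostR_le (c : Fin n → Fin n → ℝ) (h : IsPath p ε i j l) :
    minCostR p ε c i j ≤ pathCost c l :=
  csInf_le (finite_pathCosts p ε c i j).bddBelow ⟨l, h, rfl⟩

lemma exists_pathCost_eq_minCostR (p : Fin n → Pt) (c : Fin n → Fin n → ℝ) (hε : 0 ≤ ε)
    (hij : i ≤ j) : ∃ l, IsPath p ε i j l ∧ pathCost c l = minCostR p ε c i j := by
  obtain ⟨l, hl⟩ := exists_isPath p hε hij
  have hne : {s | ∃ l, IsPath p ε i j l ∧ pathCost c l = s}.Nonempty := ⟨_, l, hl, rfl⟩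
  exact hne.csInf_mem (finite_pathCosts p ε c i j)

theorem exists_refinement (c : Fin n → Fin n → ℝ) (hε : 0 ≤ ε) {L : List (Fin n)}
    (hL : IsPath p ε' i j L) :
    ∃ L', IsPath p ε i j L' ∧ L ⊆ L' ∧ pathCost c L' = pathCost (minCostR p ε c) L := by
  induction L generalizing i with
  | nil => exact absurd rfl hL.ne_nil
  | cons a t ih =>
    obtain rfl : a = i := Option.some.inj hL.2.1
    cases t with
    | nil =>
      obtain rfl : a = j := Option.some.inj hL.2.2.1
      exact ⟨[a], isPath_singleton p ε a, List.Subset.refl _, rfl⟩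
    | cons b t =>
      obtain ⟨hab, -, hbt⟩ := isPath_cons_cons_iff.1 hL
      obtain ⟨L'', hL'', hsub, hcost⟩ := ih hbt
      obtain ⟨l₀, hl₀, hcost₀⟩ := exists_pathCost_eq_minCostR p c hε hab.le
      obtain ⟨s, rfl⟩ := hl₀.exists_eq_append
      obtain ⟨u, rfl⟩ := hL''.exists_eq_cons
      have hpath : IsPath p ε a j (s ++ b :: u) := isPath_append_cons_iff.2 ⟨hl₀, hL''⟩
      refine ⟨_, hpath, List.cons_subset.2 ⟨hpath.head_mem, ?_⟩, ?_⟩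
      · exact List.Subset.trans hsub (List.subset_append_right _ _)
      · rw [pathCost_append_cons, hcost₀, hcost, pathCost_cons_cons]

theorem pathCost_minCostR_le (c : Fin n → Fin n → ℝ) {L l : List (Fin n)}
    (hL : IsPath p ε' i j L) (hl : IsPath p ε i j l) (hsub : L ⊆ l) :
    pathCost (minCostR p ε c) L ≤ pathCost c l := by
  induction L generalizing i l with
  | nil => exact absurd rfl hL.ne_nil
  | cons a t ih =>
    obtain rfl : a = i := Option.some.inj hL.2.1
    cases t with
    | nil =>
      obtain rfl : a = j := Option.some.inj hL.2.2.1
      simp [hl.eq_singleton]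
    | cons b t =>
      obtain ⟨-, -, hbt⟩ := isPath_cons_cons_iff.1 hL
      obtain ⟨s, u, rfl⟩ := List.append_of_mem (hsub (by simp : b ∈ a :: b :: t))
      obtain ⟨hsb, hbu⟩ := isPath_append_cons_iff.1 hl
      -- the vertices of `t` exceed `b`, so they lie in the part of `l` after `b`
      have hsub' : b :: t ⊆ b :: u := fun v hv => by
        rcases List.mem_append.1 (hsub (List.mem_cons_of_mem a hv)) with hvs | hvu
        · have hvb : v < b := (List.pairwise_append.1 hsb.pairwise).2.2 v hvs b (by simp)
          exact absurd (hbt.le_of_mem hv) hvb.not_ge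
        · exact hvu
      rw [pathCost_cons_cons, pathCost_append_cons]
      exact add_le_add (minCostR_le c hsb) (ih hbt hbu hsub')

end Paths

section Levels

variable {n m : ℕ} {p : Fin n → Pt} {ε w : ℕ → ℝ} {cw : ℕ → Fin n → Fin n → ℝ}
  {v0 v1 : Fin n} {L : List (Fin n)}

structure IsWeightedCost (p : Fin n → Pt) (m : ℕ) (ε w : ℕ → ℝ)
    (cw : ℕ → Fin n → Fin n → ℝ) : Prop where
  one : ∀ i j : Fin n, i < j → err p i j ≤ ε 1 → cw 1 i j = w 1
  succ : ∀ k, 1 ≤ k → k < m → ∀ i j : Fin n, i < j → err p i j ≤ ε (k + 1) →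
    cw (k + 1) i j = w (k + 1) + minCostR p (ε k) (cw k) i j

lemma ProgSimp.update_succ {k : ℕ} {S : ℕ → List (Fin n)} (hS : ProgSimp p k ε v0 v1 S)
    (hL : IsPath p (ε (k + 1)) v0 v1 L) (hsub : L ⊆ S k) :
    ProgSimp p (k + 1) ε v0 v1 (Function.update S (k + 1) L) := by
  constructor
  · intro j hj hjk
    rcases Nat.lt_or_eq_of_le hjk with hjk | rfl
    · rw [Function.update_of_ne (by omega)]
      exact hS.1 j hj (by omega)
    · simpa using hL
  · intro j hj hjk
    rcases Nat.lt_or_eq_of_le (Nat.le_of_lt_succ hjk) with hjk | rfl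
    · rw [Function.update_of_ne (by omega), Function.update_of_ne (by omega)]
      exact hS.2 j hj hjk
    · rw [Function.update_self, Function.update_of_ne (by omega)]
      exact hsub

namespace IsWeightedCost

lemma pathCost_one (hcw : IsWeightedCost p m ε w cw) (hL : IsPath p (ε 1) v0 v1 L) :
    pathCost (cw 1) L = w 1 * ((L.length : ℝ) - 1) := by
  rw [pathCost_congr (d := fun _ _ => w 1)
    fun e he => hcw.one _ _ (lt_of_mem_edges hL.1 he) (hL.2.2.2 e he), pathCost_const _ hL.ne_nil]

lemma pathCost_succ (hcw : IsWeightedCost p m ε w cw) {k : ℕ} (hk : 1 ≤ k) (hkm : k < m)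
    (hL : IsPath p (ε (k + 1)) v0 v1 L) :
    pathCost (cw (k + 1)) L =
      w (k + 1) * ((L.length : ℝ) - 1) + pathCost (minCostR p (ε k) (cw k)) L := by
  rw [pathCost_congr (d := fun i j => w (k + 1) + minCostR p (ε k) (cw k) i j)
    fun e he => hcw.succ k hk hkm _ _ (lt_of_mem_edges hL.1 he) (hL.2.2.2 e he),
    pathCost_add (fun _ _ => w (k + 1)), pathCost_const _ hL.ne_nil]

lemma pathCost_le_sum_of_progSimp (hcw : IsWeightedCost p m ε w cw) {S : ℕ → List (Fin n)}
    (hS : ProgSimp p m ε v0 v1 S) {k : ℕ} (hk : 1 ≤ k) (hkm : k ≤ m) :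
    pathCost (cw k) (S k) ≤ ∑ j ∈ Finset.Icc 1 k, w j * (((S j).length : ℝ) - 1) := by
  induction k, hk using Nat.le_induction with
  | base => rw [hcw.pathCost_one (hS.1 1 le_rfl hkm), Finset.Icc_self, Finset.sum_singleton]
  | succ k hk ih =>
    have hfine := hS.1 k hk (by omega)
    have hcoarse := hS.1 (k + 1) (by omega) hkm
    rw [hcw.pathCost_succ hk hkm hcoarse, Finset.sum_Icc_succ_top (by omega)]
    linarith [ih (by omega), pathCost_minCostR_le (cw k) hcoarse hfine (hS.2 k hk hkm)]

lemma exists_progSimp_sum_le (hcw : IsWeightedCost p m ε w cw)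
    (hε : ∀ k, 1 ≤ k → k ≤ m → 0 ≤ ε k) {k : ℕ} (hk : 1 ≤ k) (hkm : k ≤ m)
    (hL : IsPath p (ε k) v0 v1 L) :
    ∃ S, ProgSimp p k ε v0 v1 S ∧ S k = L ∧
      ∑ j ∈ Finset.Icc 1 k, w j * (((S j).length : ℝ) - 1) ≤ pathCost (cw k) L := by
  induction k, hk using Nat.le_induction generalizing L with
  | base =>
    refine ⟨fun _ => L, ⟨fun j hj hj1 => ?_, fun j hj hj1 => by omega⟩, rfl, ?_⟩
    · obtain rfl : j = 1 := by omega
      exact hL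
    · rw [hcw.pathCost_one hL, Finset.Icc_self, Finset.sum_singleton]
  | succ k hk ih =>
    obtain ⟨L', hL', hsub, hcost⟩ := exists_refinement (cw k) (hε k hk (by omega)) hL
    obtain ⟨S, hS, rfl, hsum⟩ := ih (by omega) hL'
    refine ⟨Function.update S (k + 1) L, hS.update_succ hL hsub, by simp, ?_⟩
    rw [Finset.sum_Icc_succ_top (by omega), Function.update_self,
      hcw.pathCost_succ hk hkm hL, ← hcost]
    have hrest :
        ∑ j ∈ Finset.Icc 1 k, w j * (((Function.update S (k + 1) L j).length : ℝ) - 1) =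
          ∑ j ∈ Finset.Icc 1 k, w j * (((S j).length : ℝ) - 1) :=
      Finset.sum_congr rfl fun j hj => by
        rw [Function.update_of_ne (by grind)]
    linarith

theorem isLeast_sum_progSimp (hcw : IsWeightedCost p m ε w cw)
    (hε : ∀ k, 1 ≤ k → k ≤ m → 0 ≤ ε k) (hm : 1 ≤ m) (hv : v0 ≤ v1) :
    IsLeast {s : ℝ | ∃ S : ℕ → List (Fin n), ProgSimp p m ε v0 v1 S ∧
        ∑ k ∈ Finset.Icc 1 m, w k * (((S k).length : ℝ) - 1) = s}
      (minCostR p (ε m) (cw m) v0 v1) := by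
  have hle : ∀ S, ProgSimp p m ε v0 v1 S → minCostR p (ε m) (cw m) v0 v1 ≤
      ∑ k ∈ Finset.Icc 1 m, w k * (((S k).length : ℝ) - 1) :=
    fun S hS => (minCostR_le (cw m) (hS.1 m hm le_rfl)).trans
      (hcw.pathCost_le_sum_of_progSimp hS hm le_rfl)
  obtain ⟨L, hL, hcost⟩ := exists_pathCost_eq_minCostR p (cw m) (hε m hm le_rfl) hv
  obtain ⟨S, hS, -, hsum⟩ := hcw.exists_progSimp_sum_le hε hm le_rfl hL
  refine ⟨⟨S, hS, le_antisymm (hcost ▸ hsum) (hle S hS)⟩, ?_⟩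
  rintro _ ⟨S, hS, rfl⟩
  exact hle S hS

end IsWeightedCost

end Levels

/-- The minimum weighted `c_w m`-cost of an `ε m`-simplification equals
the minimum of `Σ_{k=1}^m w k * (|S k| - 1)` over all progressive simplifications, and
the minimum weighted cumulative size `Σ_{k=1}^m w k * |S k|` equals `Σ_{k=1}^m w k`
plus the former minimum. -/
theorem weighted_min_cost_eq_min_progressive {n m : ℕ} (hn : 2 ≤ n) (hm : 1 ≤ m)
    (p : Fin n → Pt)
    (ε : ℕ → ℝ) (hε1 : 0 < ε 1)
    (hεmono : ∀ k, 1 ≤ k → k < m → ε k < ε (k + 1))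
    (w : ℕ → ℝ)
    (cw : ℕ → Fin n → Fin n → ℝ)
    (hc1 : ∀ i j : Fin n, i < j → err p i j ≤ ε 1 → cw 1 i j = w 1)
    (hck : ∀ k, 2 ≤ k → k ≤ m → ∀ i j : Fin n, i < j → err p i j ≤ ε k →
      cw k i j = w k + minCostR p (ε (k - 1)) (cw (k - 1)) i j) :
    minCostR p (ε m) (cw m) (⟨0, by omega⟩ : Fin n) (⟨n - 1, by omega⟩ : Fin n) =
      sInf {s : ℝ | ∃ S : ℕ → List (Fin n),
        ProgSimp p m ε (⟨0, by omega⟩ : Fin n) (⟨n - 1, by omega⟩ : Fin n) S ∧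
        ∑ k ∈ Finset.Icc 1 m, w k * (((S k).length : ℝ) - 1) = s} ∧
    sInf {s : ℝ | ∃ S : ℕ → List (Fin n),
        ProgSimp p m ε (⟨0, by omega⟩ : Fin n) (⟨n - 1, by omega⟩ : Fin n) S ∧
        ∑ k ∈ Finset.Icc 1 m, w k * ((S k).length : ℝ) = s} =
      (∑ k ∈ Finset.Icc 1 m, w k) +
        minCostR p (ε m) (cw m) (⟨0, by omega⟩ : Fin n) (⟨n - 1, by omega⟩ : Fin n) := by
  have hcw : IsWeightedCost p m ε w cw :=
    ⟨hc1, fun k hk hkm => by simpa only [Nat.add_sub_cancel] using hck (k + 1) (by omega) hkm⟩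
  have hε : ∀ k, 1 ≤ k → k ≤ m → 0 ≤ ε k := by
    intro k hk
    induction k, hk using Nat.le_induction with
    | base => exact fun _ => hε1.le
    | succ k hk ih => exact fun hkm => (ih (by omega)).trans (hεmono k hk hkm).le
  have hmin := hcw.isLeast_sum_progSimp (v0 := ⟨0, by omega⟩) (v1 := ⟨n - 1, by omega⟩)
    hε hm (Fin.mk_le_mk.2 (Nat.zero_le _))
  have hshift : ∀ S : ℕ → List (Fin n), ∑ k ∈ Finset.Icc 1 m, w k * ((S k).length : ℝ) =
      ∑ k ∈ Finset.Icc 1 m, w k + ∑ k ∈ Finset.Icc 1 m, w k * (((S k).length : ℝ) - 1) :=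
    fun S => by
      rw [← Finset.sum_add_distrib]
      exact Finset.sum_congr rfl fun _ _ => by ring
  refine ⟨hmin.csInf_eq.symm, IsLeast.csInf_eq ⟨?_, ?_⟩⟩
  · obtain ⟨S, hS, hsum⟩ := hmin.1
    exact ⟨S, hS, by rw [hshift, hsum]⟩
  · rintro _ ⟨S, hS, rfl⟩
    rw [hshift]
    exact add_le_add_right (hmin.2 ⟨S, hS, rfl⟩) _
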